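/- arXiv:2509.10323 — 5 statements merged into one kernel-verified Lean document; each statement's English description precedes it below -/
import Mathlib

section
/- If the initial data satisfies φ_in(x,v) = v²/2 for all x∈ℝ, v∈ℝ, then the semi-discrete scheme defined by μ^{n+1}(x) = min_{j∈ℤ} φ_j^n(x−Δt·v_j) and φ_j^{n+1}(x) = min{φ_j^n(x−Δt·v_j)+Δt, v_j²/2 + μ^{n+1}(x)} (with v_j = j·Δv) preserves the equilibrium: for all n ≥ 0, all j∈ℤ, and all x∈ℝ, φ_j^n(x) = v_j²/2. -/
theorem isLeast_range_half_sq (Δv : ℝ) :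
    IsLeast (Set.range fun j : ℤ => ((j : ℝ) * Δv) ^ 2 / 2) 0 :=
  ⟨⟨0, by simp⟩, by rintro _ ⟨j, rfl⟩; positivity⟩

theorem limit_scheme_preserves_equilibrium_general
    (Δt Δv : ℝ) (hΔt : 0 < Δt)
    (φ : ℕ → ℤ → ℝ → ℝ) (μ : ℕ → ℝ → ℝ)
    (hμ : ∀ n x, IsLeast (Set.range fun j : ℤ => φ n j (x - Δt * ((j : ℝ) * Δv)))
        (μ (n + 1) x))
    (hφ : ∀ n j x, φ (n + 1) j x =
        min (φ n j (x - Δt * ((j : ℝ) * Δv)) + Δt)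
            (((j : ℝ) * Δv) ^ 2 / 2 + μ (n + 1) x))
    (hinit : ∀ j x, φ 0 j x = ((j : ℝ) * Δv) ^ 2 / 2) :
    ∀ n j x, φ n j x = ((j : ℝ) * Δv) ^ 2 / 2 := by
  intro n
  induction n with
  | zero => exact hinit
  | succ n ih =>
    intro j x
    have hμ_zero : μ (n + 1) x = 0 :=
      (hμ n x).unique (by simpa only [ih] using isLeast_range_half_sq Δv)
    rw [hφ, ih, hμ_zero, add_zero, min_eq_right (le_add_of_nonneg_right hΔt.le)]

/-- Equilibrium preservation for the limit semi-discrete scheme. -/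
theorem limit_scheme_preserves_equilibrium
    (Δt Δv : ℝ) (hΔt : 0 < Δt) (hΔv : 0 < Δv)
    (φ : ℕ → ℤ → ℝ → ℝ) (μ : ℕ → ℝ → ℝ)
    (hμ : ∀ n x, IsLeast (Set.range fun j : ℤ => φ n j (x - Δt * ((j : ℝ) * Δv)))
        (μ (n + 1) x))
    (hφ : ∀ n j x, φ (n + 1) j x =
        min (φ n j (x - Δt * ((j : ℝ) * Δv)) + Δt)
            (((j : ℝ) * Δv) ^ 2 / 2 + μ (n + 1) x))
    (hinit : ∀ j x, φ 0 j x = ((j : ℝ) * Δv) ^ 2 / 2) :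
    ∀ n j x, φ n j x = ((j : ℝ) * Δv) ^ 2 / 2 :=
  limit_scheme_preserves_equilibrium_general Δt Δv hΔt φ μ hμ hφ hinit
end

section
/- Assume the CFL-type condition Δt ≤ Δv²/2. Then for any solution (μ^n, φ_j^n) of the limit semi-discrete scheme, the discrete velocity-minimum is nonincreasing in time: for all x∈ℝ and all n ≥ 0, μ^{n+1}(x) − μ^n(x) ≤ 0. -/
/-!
The zero-velocity component is transported without shift, so
`μ^{n+1}(x) ≤ φ_0^n(x)`, and for `n ≥ 1` the scheme caps `φ_0^n(x)` by `μ^n(x) + v_0²/2 = μ^n(x)`.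
At `n = 0` both `μ^0` and `μ^1` are the minimum of the same family, hence equal.
-/

theorem le_apply_zero_of_isLeast_range_shift {f : ℤ → ℝ → ℝ} {Δt Δv x m : ℝ}
    (h : IsLeast (Set.range fun j : ℤ => f j (x - Δt * ((j : ℝ) * Δv))) m) :
    m ≤ f 0 x := by
  simpa using h.2 ⟨0, rfl⟩

theorem scheme_le_kinetic_add_min {Δt Δv : ℝ} {φ : ℕ → ℤ → ℝ → ℝ} {μ : ℕ → ℝ → ℝ}
    (hφ : ∀ n j x, φ (n + 1) j x =
        min (φ n j (x - Δt * ((j : ℝ) * Δv)) + Δt)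
            (((j : ℝ) * Δv) ^ 2 / 2 + μ (n + 1) x))
    (n : ℕ) (j : ℤ) (x : ℝ) :
    φ (n + 1) j x ≤ ((j : ℝ) * Δv) ^ 2 / 2 + μ (n + 1) x :=
  hφ n j x ▸ min_le_right _ _

theorem limit_scheme_min_decreasing_general
    (Δt Δv : ℝ)
    (φ : ℕ → ℤ → ℝ → ℝ) (μ : ℕ → ℝ → ℝ)
    (hμ0 : ∀ x, IsLeast (Set.range fun j : ℤ => φ 0 j (x - Δt * ((j : ℝ) * Δv)))
        (μ 0 x))
    (hμ : ∀ n x, IsLeast (Set.range fun j : ℤ => φ n j (x - Δt * ((j : ℝ) * Δv)))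
        (μ (n + 1) x))
    (hφ : ∀ n j x, φ (n + 1) j x =
        min (φ n j (x - Δt * ((j : ℝ) * Δv)) + Δt)
            (((j : ℝ) * Δv) ^ 2 / 2 + μ (n + 1) x)) :
    ∀ x, ∀ n : ℕ, μ (n + 1) x - μ n x ≤ 0 := by
  intro x n
  rw [sub_nonpos]
  rcases n with _ | n
  · exact ((hμ 0 x).unique (hμ0 x)).le
  · calc μ (n + 2) x ≤ φ (n + 1) 0 x := le_apply_zero_of_isLeast_range_shift (hμ (n + 1) x)
      _ ≤ μ (n + 1) x := by simpa using scheme_le_kinetic_add_min hφ n 0 x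

/-- Under the CFL condition Δt ≤ Δv²/2, the discrete velocity-minimum is
nonincreasing in time. -/
theorem limit_scheme_min_decreasing
    (Δt Δv M : ℝ) (hΔt : 0 < Δt) (hΔv : 0 < Δv) (hM : 0 < M)
    (hCFL : Δt ≤ Δv ^ 2 / 2)
    (φ : ℕ → ℤ → ℝ → ℝ) (μ : ℕ → ℝ → ℝ)
    (hbφ : ∀ j x, |φ 0 j x - ((j : ℝ) * Δv) ^ 2 / 2| ≤ M)
    (hμ0 : ∀ x, IsLeast (Set.range fun j : ℤ => φ 0 j (x - Δt * ((j : ℝ) * Δv)))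
        (μ 0 x))
    (hμ : ∀ n x, IsLeast (Set.range fun j : ℤ => φ n j (x - Δt * ((j : ℝ) * Δv)))
        (μ (n + 1) x))
    (hφ : ∀ n j x, φ (n + 1) j x =
        min (φ n j (x - Δt * ((j : ℝ) * Δv)) + Δt)
            (((j : ℝ) * Δv) ^ 2 / 2 + μ (n + 1) x)) :
    ∀ x, ∀ n : ℕ, μ (n + 1) x - μ n x ≤ 0 :=
  limit_scheme_min_decreasing_general Δt Δv φ μ hμ0 hμ hφ
end

section
/- Maximum principle for the ε-scheme: let ε > 0 and suppose (φ_j^{ε,n}, μ^{ε,n}) solve the semi-discrete scheme μ^{ε,n+1}(x) = −ε ln⟨e^{−φ_j^{ε,n}(x−Δt v_j)/ε}⟩_Δv and e^{−φ_j^{ε,n+1}(x)/ε} = e^{−φ_j^{ε,n}(x−Δt v_j)/ε} e^{−Δt/ε} + (1 − e^{−Δt/ε}) (1/c_Δv^ε) e^{−v_j²/(2ε)} e^{−μ^{ε,n+1}(x)/ε}, where c_Δv^ε = Σ_j e^{−v_j²/(2ε)} Δv. If |φ_j^{ε,0}(x) − v_j²/2| ≤ M for all j, x, then for all n ≥ 0: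 |φ_j^{ε,n}(x) − v_j²/2| ≤ M and |μ^{ε,n}(x) + ε ln(c_Δv^ε)| ≤ M. -/
/-!
In the variables `e^{-φ/ε}` the scheme is linear with nonnegative coefficients, and the bound
`|φ_j - v_j²/2| ≤ M` says exactly that `e^{-φ_j/ε}` lies between `e^{∓M/ε} e^{-v_j²/(2ε)}`.
Summing over `j` squeezes `e^{-μ/ε}` between `e^{∓M/ε} c`, so the relaxation term
`(1/c) e^{-v_j²/(2ε)} e^{-μ/ε}` obeys the same bound as the transported `e^{-φ_j/ε}`,
and the update is a convex combination of the two.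
-/

open Real Set

lemma abs_sub_le_iff_exp_neg_div_mem_Icc {ε : ℝ} (hε : 0 < ε) (a b M : ℝ) :
    |a - b| ≤ M ↔
      exp (-a / ε) ∈ Icc (exp (-M / ε) * exp (-b / ε)) (exp (M / ε) * exp (-b / ε)) := by
  rw [mem_Icc, ← exp_add, ← exp_add, exp_le_exp, exp_le_exp, ← add_div,
    ← add_div, div_le_div_iff_of_pos_right hε, div_le_div_iff_of_pos_right hε, abs_le]
  constructor <;> rintro ⟨h₁, h₂⟩ <;> constructor <;> linarith

lemma mul_mem_Icc_mul {t x y a b : ℝ} (ht : 0 ≤ t) (h : x ∈ Icc (a * y) (b * y)) :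
    t * x ∈ Icc (a * (t * y)) (b * (t * y)) := by
  rw [mul_left_comm a, mul_left_comm b]
  exact ⟨mul_le_mul_of_nonneg_left h.1 ht, mul_le_mul_of_nonneg_left h.2 ht⟩

lemma tsum_mem_Icc_mul_tsum {ι : Type*} {f g : ι → ℝ} {a b : ℝ} (ha : 0 < a)
    (hg : ∀ i, 0 ≤ g i) (hf : Summable f) (h : ∀ i, f i ∈ Icc (a * g i) (b * g i)) :
    ∑' i, f i ∈ Icc (a * ∑' i, g i) (b * ∑' i, g i) := by
  have hg_sum : Summable g := by
    refine .of_nonneg_of_le hg (fun i => ?_) (hf.mul_left a⁻¹)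
    rw [le_inv_mul_iff₀ ha]
    exact (h i).1
  rw [← tsum_mul_left, ← tsum_mul_left]
  exact ⟨(hg_sum.mul_left a).tsum_le_tsum (fun i => (h i).1) hf,
    hf.tsum_le_tsum (fun i => (h i).2) (hg_sum.mul_left b)⟩

lemma abs_sub_maxwellian_le_iff {ε : ℝ} (hε : 0 < ε) (a v M : ℝ) :
    |a - v ^ 2 / 2| ≤ M ↔ exp (-a / ε) ∈
      Icc (exp (-M / ε) * exp (-v ^ 2 / (2 * ε))) (exp (M / ε) * exp (-v ^ 2 / (2 * ε))) := by
  rw [abs_sub_le_iff_exp_neg_div_mem_Icc hε, show -(v ^ 2 / 2) / ε = -v ^ 2 / (2 * ε) by ring]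

structure IsEpsScheme (Δt Δv ε c : ℝ) (φ : ℕ → ℤ → ℝ → ℝ) (μ : ℕ → ℝ → ℝ) : Prop where
  c_eq : c = ∑' j : ℤ, exp (-((j : ℝ) * Δv) ^ 2 / (2 * ε)) * Δv
  exp_μ_succ : ∀ n x, exp (-(μ (n + 1) x) / ε) =
    ∑' j : ℤ, exp (-(φ n j (x - Δt * ((j : ℝ) * Δv))) / ε) * Δv
  exp_φ_succ : ∀ n j x, exp (-(φ (n + 1) j x) / ε) =
    exp (-(φ n j (x - Δt * ((j : ℝ) * Δv))) / ε) * exp (-Δt / ε)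
      + (1 - exp (-Δt / ε)) * (1 / c) * exp (-((j : ℝ) * Δv) ^ 2 / (2 * ε))
        * exp (-(μ (n + 1) x) / ε)

namespace IsEpsScheme

variable {Δt Δv ε c M : ℝ} {φ : ℕ → ℤ → ℝ → ℝ} {μ : ℕ → ℝ → ℝ}
  (S : IsEpsScheme Δt Δv ε c φ μ)
include S

/-- A non-summable `tsum` is `0`, whereas `exp_μ_succ` makes this one positive. -/
lemma summable_transported (n : ℕ) (x : ℝ) :
    Summable fun j : ℤ => exp (-(φ n j (x - Δt * ((j : ℝ) * Δv))) / ε) * Δv := by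
  by_contra h
  have := S.exp_μ_succ n x
  rw [tsum_eq_zero_of_not_summable h] at this
  exact (exp_pos _).ne' this

lemma exp_μ_succ_mem_Icc (hΔv : 0 ≤ Δv) (hε : 0 < ε) {n : ℕ}
    (hn : ∀ j x, |φ n j x - ((j : ℝ) * Δv) ^ 2 / 2| ≤ M) (x : ℝ) :
    exp (-(μ (n + 1) x) / ε) ∈ Icc (exp (-M / ε) * c) (exp (M / ε) * c) := by
  rw [S.exp_μ_succ, S.c_eq]
  refine tsum_mem_Icc_mul_tsum (exp_pos _) (fun j => by positivity)
    (S.summable_transported n x) (fun j => ?_)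
  simpa only [mul_comm _ Δv] using
    mul_mem_Icc_mul hΔv ((abs_sub_maxwellian_le_iff hε _ _ _).1 (hn j _))

lemma c_pos (hΔv : 0 ≤ Δv) (hε : 0 < ε) {n : ℕ}
    (hn : ∀ j x, |φ n j x - ((j : ℝ) * Δv) ^ 2 / 2| ≤ M) : 0 < c :=
  pos_of_mul_pos_right ((exp_pos _).trans_le (S.exp_μ_succ_mem_Icc hΔv hε hn 0).2)
    (exp_pos _).le

lemma abs_sub_maxwellian_le_succ (hΔt : 0 ≤ Δt) (hΔv : 0 ≤ Δv) (hε : 0 < ε) {n : ℕ}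
    (hn : ∀ j x, |φ n j x - ((j : ℝ) * Δv) ^ 2 / 2| ≤ M) :
    ∀ j x, |φ (n + 1) j x - ((j : ℝ) * Δv) ^ 2 / 2| ≤ M := by
  intro j x
  set θ := exp (-Δt / ε)
  set g := exp (-((j : ℝ) * Δv) ^ 2 / (2 * ε))
  have hθ : θ ≤ 1 := exp_le_one_iff.2 (div_nonpos_of_nonpos_of_nonneg (by linarith) hε.le)
  have hc : 0 < c := S.c_pos hΔv hε hn
  have h_transported := (abs_sub_maxwellian_le_iff hε _ _ _).1 (hn j (x - Δt * ((j : ℝ) * Δv)))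
  have h_relaxation : 1 / c * g * exp (-(μ (n + 1) x) / ε) ∈
      Icc (exp (-M / ε) * g) (exp (M / ε) * g) := by
    have := mul_mem_Icc_mul (by positivity : 0 ≤ 1 / c * g) (S.exp_μ_succ_mem_Icc hΔv hε hn x)
    rwa [show 1 / c * g * c = g by field_simp] at this
  rw [abs_sub_maxwellian_le_iff hε, S.exp_φ_succ]
  convert convex_Icc _ _ h_transported h_relaxation (exp_pos _).le (sub_nonneg.2 hθ)
    (add_sub_cancel θ 1) using 1
  simp only [smul_eq_mul]
  ring

lemma abs_sub_maxwellian_le (hΔt : 0 ≤ Δt) (hΔv : 0 ≤ Δv) (hε : 0 < ε)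
    (h₀ : ∀ j x, |φ 0 j x - ((j : ℝ) * Δv) ^ 2 / 2| ≤ M) :
    ∀ n j x, |φ n j x - ((j : ℝ) * Δv) ^ 2 / 2| ≤ M :=
  fun n => Nat.rec h₀ (fun _ hn => S.abs_sub_maxwellian_le_succ hΔt hΔv hε hn) n

lemma abs_μ_succ_add_log_le (hΔv : 0 ≤ Δv) (hε : 0 < ε) {n : ℕ}
    (hn : ∀ j x, |φ n j x - ((j : ℝ) * Δv) ^ 2 / 2| ≤ M) (x : ℝ) :
    |μ (n + 1) x + ε * log c| ≤ M := by
  have hc : exp (-(-(ε * log c)) / ε) = c := by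
    rw [neg_neg, mul_div_cancel_left₀ _ hε.ne', exp_log (S.c_pos hΔv hε hn)]
  rw [← sub_neg_eq_add, abs_sub_le_iff_exp_neg_div_mem_Icc hε, hc]
  exact S.exp_μ_succ_mem_Icc hΔv hε hn x

end IsEpsScheme

theorem eps_scheme_maximum_principle_general
    (Δt Δv ε M : ℝ) (hΔt : 0 < Δt) (hΔv : 0 < Δv) (hε : 0 < ε)
    (c : ℝ) (hc : c = ∑' j : ℤ, Real.exp (-((j : ℝ) * Δv) ^ 2 / (2 * ε)) * Δv)
    (φ : ℕ → ℤ → ℝ → ℝ) (μ : ℕ → ℝ → ℝ)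
    (hμ : ∀ n x, Real.exp (-(μ (n + 1) x) / ε) =
        ∑' j : ℤ, Real.exp (-(φ n j (x - Δt * ((j : ℝ) * Δv))) / ε) * Δv)
    (hφ : ∀ n j x, Real.exp (-(φ (n + 1) j x) / ε) =
        Real.exp (-(φ n j (x - Δt * ((j : ℝ) * Δv))) / ε) * Real.exp (-Δt / ε)
        + (1 - Real.exp (-Δt / ε)) * (1 / c)
          * Real.exp (-((j : ℝ) * Δv) ^ 2 / (2 * ε))
          * Real.exp (-(μ (n + 1) x) / ε))
    (hinit : ∀ j x, |φ 0 j x - ((j : ℝ) * Δv) ^ 2 / 2| ≤ M) :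
    (∀ n j x, |φ n j x - ((j : ℝ) * Δv) ^ 2 / 2| ≤ M) ∧
    (∀ n x, |μ (n + 1) x + ε * Real.log c| ≤ M) := by
  have S : IsEpsScheme Δt Δv ε c φ μ := ⟨hc, hμ, hφ⟩
  have hbound := S.abs_sub_maxwellian_le hΔt.le hΔv.le hε hinit
  exact ⟨hbound, fun n => S.abs_μ_succ_add_log_le hΔv.le hε (hbound n)⟩

/-- Maximum principle for the ε-scheme: the bounds
`|φ_j^{ε,n} - v_j²/2| ≤ M` and `|μ^{ε,n} + ε ln c_Δv^ε| ≤ M` propagate. -/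
theorem eps_scheme_maximum_principle
    (Δt Δv ε M : ℝ) (hΔt : 0 < Δt) (hΔv : 0 < Δv) (hε : 0 < ε) (hM : 0 < M)
    (c : ℝ) (hc : c = ∑' j : ℤ, Real.exp (-((j : ℝ) * Δv) ^ 2 / (2 * ε)) * Δv)
    (φ : ℕ → ℤ → ℝ → ℝ) (μ : ℕ → ℝ → ℝ)
    (hμ : ∀ n x, Real.exp (-(μ (n + 1) x) / ε) =
        ∑' j : ℤ, Real.exp (-(φ n j (x - Δt * ((j : ℝ) * Δv))) / ε) * Δv)
    (hφ : ∀ n j x, Real.exp (-(φ (n + 1) j x) / ε) =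
        Real.exp (-(φ n j (x - Δt * ((j : ℝ) * Δv))) / ε) * Real.exp (-Δt / ε)
        + (1 - Real.exp (-Δt / ε)) * (1 / c)
          * Real.exp (-((j : ℝ) * Δv) ^ 2 / (2 * ε))
          * Real.exp (-(μ (n + 1) x) / ε))
    (hinit : ∀ j x, |φ 0 j x - ((j : ℝ) * Δv) ^ 2 / 2| ≤ M) :
    (∀ n j x, |φ n j x - ((j : ℝ) * Δv) ^ 2 / 2| ≤ M) ∧
    (∀ n x, |μ (n + 1) x + ε * Real.log c| ≤ M) :=
  eps_scheme_maximum_principle_general Δt Δv ε M hΔt hΔv hε c hc φ μ hμ hφ hinit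
end

section
/- Monotonicity of the ε-scheme: let ε > 0 and let (φ_j^{ε,n}), (ψ_j^{ε,n}) be two solutions of the semi-discrete scheme e^{−φ_j^{ε,n+1}(x)/ε} = e^{−φ_j^{ε,n}(x−Δt v_j)/ε} e^{−Δt/ε} + (1 − e^{−Δt/ε})(1/c_Δv^ε) e^{−v_j²/(2ε)} ⟨e^{−φ_k^{ε,n}(x−Δt v_k)/ε}⟩_Δv. If φ_j^{ε,0}(x) ≤ ψ_j^{ε,0}(x) for all j, x, then φ_j^{ε,n}(x) ≤ ψ_j^{ε,n}(x) for all n ≥ 0, j∈ℤ, x∈ℝ. -/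
/-! In the variable `e^{-φ/ε}` the scheme is a nonnegative combination (the relaxation weight
`1 - e^{-Δt/ε}` is nonnegative) of the transported values `e^{-φ^n_k/ε}`, hence order preserving;
since `a ↦ e^{-a/ε}` is strictly decreasing, `φ^n ≤ ψ^n` therefore passes to `φ^{n+1} ≤ ψ^{n+1}`. -/

open Real

lemma summable_exp_neg_mul_int_sq {a : ℝ} (ha : 0 < a) :
    Summable fun k : ℤ => exp (-a * (k : ℝ) ^ 2) := by
  have hnat : Summable fun n : ℕ => exp (-a * (n : ℝ) ^ 2) :=
    summable_exp_nat_mul_of_ge (neg_lt_zero.2 ha) fun n => mod_cast Nat.le_self_pow two_ne_zero n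
  exact .of_nat_of_neg (by simpa using hnat) (by simpa using hnat)

lemma summable_exp_neg_div_of_sq_sub_le {Δv ε M : ℝ} (hΔv : Δv ≠ 0) (hε : 0 < ε) {g : ℤ → ℝ}
    (hg : ∀ k : ℤ, ((k : ℝ) * Δv) ^ 2 / 2 - M ≤ g k) :
    Summable fun k => exp (-g k / ε) := by
  have ha : 0 < Δv ^ 2 / (2 * ε) := by positivity
  refine ((summable_exp_neg_mul_int_sq ha).mul_left (exp (M / ε))).of_nonneg_of_le
    (fun _ => (exp_pos _).le) fun k => ?_
  rw [← exp_add, exp_le_exp, div_le_iff₀ hε, add_mul, div_mul_cancel₀ _ hε.ne']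
  have hquad : -(Δv ^ 2 / (2 * ε)) * (k : ℝ) ^ 2 * ε = -(((k : ℝ) * Δv) ^ 2 / 2) := by
    field_simp
  linarith [hg k, hquad]

lemma exp_neg_div_le_exp_neg_div_iff {ε : ℝ} (hε : 0 < ε) {a b : ℝ} :
    exp (-b / ε) ≤ exp (-a / ε) ↔ a ≤ b := by
  rw [exp_le_exp, div_le_div_iff_of_pos_right hε, neg_le_neg_iff]

/-- Right-hand side of the scheme for `e^{-φ^{n+1}_j(x)/ε}`, where `g k = φ^n_k(x - Δt v_k)`. -/
noncomputable def epsSchemeUpdate (Δt Δv ε c : ℝ) (g : ℤ → ℝ) (j : ℤ) : ℝ :=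
  exp (-g j / ε) * exp (-Δt / ε)
    + (1 - exp (-Δt / ε)) * (1 / c) * exp (-((j : ℝ) * Δv) ^ 2 / (2 * ε))
      * ∑' k : ℤ, exp (-g k / ε) * Δv

lemma epsSchemeUpdate_anti {Δt Δv ε c M : ℝ} (hΔt : 0 ≤ Δt) (hΔv : 0 < Δv) (hε : 0 < ε)
    (hc : 0 ≤ c) {g h : ℤ → ℝ} (hg : ∀ k : ℤ, ((k : ℝ) * Δv) ^ 2 / 2 - M ≤ g k)
    (hgh : ∀ k, g k ≤ h k) (j : ℤ) :
    epsSchemeUpdate Δt Δv ε c h j ≤ epsSchemeUpdate Δt Δv ε c g j := by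
  have hexp : ∀ k, exp (-h k / ε) ≤ exp (-g k / ε) :=
    fun k => (exp_neg_div_le_exp_neg_div_iff hε).2 (hgh k)
  have hsum_g := (summable_exp_neg_div_of_sq_sub_le hΔv.ne' hε hg).mul_right Δv
  have hsum_h : Summable fun k => exp (-h k / ε) * Δv :=
    hsum_g.of_nonneg_of_le (fun _ => by positivity)
      fun k => mul_le_mul_of_nonneg_right (hexp k) hΔv.le
  have hrelax : 0 ≤ 1 - exp (-Δt / ε) := by
    rw [sub_nonneg, exp_le_one_iff, neg_div, neg_nonpos]; positivity
  unfold epsSchemeUpdate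
  gcongr ?_ * _ + _ * ?_
  · exact hexp j
  · exact hsum_h.tsum_le_tsum (fun k => mul_le_mul_of_nonneg_right (hexp k) hΔv.le) hsum_g

theorem eps_scheme_monotone_general
    (Δt Δv ε M : ℝ) (hΔt : 0 < Δt) (hΔv : 0 < Δv) (hε : 0 < ε)
    (c : ℝ) (hc : c = ∑' j : ℤ, Real.exp (-((j : ℝ) * Δv) ^ 2 / (2 * ε)) * Δv)
    (φ ψ : ℕ → ℤ → ℝ → ℝ)
    (hbφ : ∀ n j x, |φ n j x - ((j : ℝ) * Δv) ^ 2 / 2| ≤ M)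
    (hφ : ∀ n j x, Real.exp (-(φ (n + 1) j x) / ε) =
        Real.exp (-(φ n j (x - Δt * ((j : ℝ) * Δv))) / ε) * Real.exp (-Δt / ε)
        + (1 - Real.exp (-Δt / ε)) * (1 / c)
          * Real.exp (-((j : ℝ) * Δv) ^ 2 / (2 * ε))
          * ∑' k : ℤ, Real.exp (-(φ n k (x - Δt * ((k : ℝ) * Δv))) / ε) * Δv)
    (hψ : ∀ n j x, Real.exp (-(ψ (n + 1) j x) / ε) =
        Real.exp (-(ψ n j (x - Δt * ((j : ℝ) * Δv))) / ε) * Real.exp (-Δt / ε)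
        + (1 - Real.exp (-Δt / ε)) * (1 / c)
          * Real.exp (-((j : ℝ) * Δv) ^ 2 / (2 * ε))
          * ∑' k : ℤ, Real.exp (-(ψ n k (x - Δt * ((k : ℝ) * Δv))) / ε) * Δv)
    (hinit : ∀ j x, φ 0 j x ≤ ψ 0 j x) :
    ∀ n j x, φ n j x ≤ ψ n j x := by
  have hc_nonneg : 0 ≤ c := hc ▸ tsum_nonneg fun j => by positivity
  intro n
  induction n with
  | zero => exact hinit
  | succ n ih =>
    intro j x
    let y : ℤ → ℝ := fun k => x - Δt * ((k : ℝ) * Δv)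
    rw [← exp_neg_div_le_exp_neg_div_iff hε, hφ, hψ]
    exact epsSchemeUpdate_anti (M := M) (g := fun k => φ n k (y k)) (h := fun k => ψ n k (y k))
      hΔt.le hΔv hε hc_nonneg (fun k => by linarith [(abs_le.1 (hbφ n k (y k))).1])
      (fun k => ih k (y k)) j

/-- Monotonicity of the ε-scheme: ordering of initial data propagates. -/
theorem eps_scheme_monotone
    (Δt Δv ε M : ℝ) (hΔt : 0 < Δt) (hΔv : 0 < Δv) (hε : 0 < ε) (hM : 0 < M)
    (c : ℝ) (hc : c = ∑' j : ℤ, Real.exp (-((j : ℝ) * Δv) ^ 2 / (2 * ε)) * Δv)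
    (φ ψ : ℕ → ℤ → ℝ → ℝ)
    (hbφ : ∀ n j x, |φ n j x - ((j : ℝ) * Δv) ^ 2 / 2| ≤ M)
    (hbψ : ∀ n j x, |ψ n j x - ((j : ℝ) * Δv) ^ 2 / 2| ≤ M)
    (hφ : ∀ n j x, Real.exp (-(φ (n + 1) j x) / ε) =
        Real.exp (-(φ n j (x - Δt * ((j : ℝ) * Δv))) / ε) * Real.exp (-Δt / ε)
        + (1 - Real.exp (-Δt / ε)) * (1 / c)
          * Real.exp (-((j : ℝ) * Δv) ^ 2 / (2 * ε))
          * ∑' k : ℤ, Real.exp (-(φ n k (x - Δt * ((k : ℝ) * Δv))) / ε) * Δv)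
    (hψ : ∀ n j x, Real.exp (-(ψ (n + 1) j x) / ε) =
        Real.exp (-(ψ n j (x - Δt * ((j : ℝ) * Δv))) / ε) * Real.exp (-Δt / ε)
        + (1 - Real.exp (-Δt / ε)) * (1 / c)
          * Real.exp (-((j : ℝ) * Δv) ^ 2 / (2 * ε))
          * ∑' k : ℤ, Real.exp (-(ψ n k (x - Δt * ((k : ℝ) * Δv))) / ε) * Δv)
    (hinit : ∀ j x, φ 0 j x ≤ ψ 0 j x) :
    ∀ n j x, φ n j x ≤ ψ n j x :=
  eps_scheme_monotone_general Δt Δv ε M hΔt hΔv hε c hc φ ψ hbφ hφ hψ hinit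
end

section
/- Interpolation error propagation (one step of the fully discrete scheme): suppose for all i,j∈ℤ the errors e_{φ,ij}^n = φ_j^n(x_i) − φ_{ij}^n satisfy |e_{φ,ij}^n| ≤ E_n, the semi-discrete solution x ↦ φ_j^n(x) is L-Lipschitz for each j, and the fully discrete update uses the monotone linear interpolation φ̄_{i_j,j}^n = α_j φ_{i_j,j}^n + (1−α_j) φ_{i_j−1,j}^n with α_j ∈ [0,1], i_j = i − ⌊v_j Δt/Δx⌋, α_j = v_j Δt/Δx − ⌊v_j Δt/Δx⌋. Then the updated errors satisfy |μ^{n+1}(x_i) − μ_i^{n+1}| ≤ E_n + 2LΔx and |φ_j^{n+1}(x_i) − φ_{ij}^{n+1}| ≤ E_n + 2LΔx, where μ_i^{n+1} = min_j φ̄_{i_j,j}^n and φ_{ij}^{n+1} = min{φ̄_{i_j,j}^n + Δt, v_j²/2 + μ_i^{n+1}}, and analogously for the semi-discrete quantities with exact transport. Consequently, by induction, after n steps the errors are bounded by 2LnΔx. -/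
/-!
Writing `s = v_j Δt / Δx = ⌊s⌋ + fract s`, the foot of the characteristic through `x_i` is
`x_{i-⌊s⌋} - (fract s) Δx`, a point between the two grid nodes used by the interpolation. A
Lipschitz function is within `LΔx` of each of its two nodal values there, hence of any convex
combination of them, and replacing exact nodal values by discrete ones moves a convex combination
by at most `E`. Minima over `j` and `min` are `1`-Lipschitz for the sup-norm, so the pointwise
bound `E + LΔx ≤ E + 2LΔx` passes to `μ` and to the updated `φ`.
-/

lemma abs_sub_convexComb_le {p u v a B : ℝ} (ha₀ : 0 ≤ a) (ha₁ : a ≤ 1)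
    (hu : |p - u| ≤ B) (hv : |p - v| ≤ B) : |p - (a * u + (1 - a) * v)| ≤ B := by
  rw [abs_le] at *
  constructor <;> nlinarith

lemma abs_convexComb_sub_convexComb_le {u v u' v' a B : ℝ} (ha₀ : 0 ≤ a) (ha₁ : a ≤ 1)
    (hu : |u - u'| ≤ B) (hv : |v - v'| ≤ B) :
    |(a * u + (1 - a) * v) - (a * u' + (1 - a) * v')| ≤ B := by
  rw [abs_le] at *
  constructor <;> nlinarith

lemma abs_sub_interp_of_lipschitz_le {f : ℝ → ℝ} {L h a : ℝ} (hL : 0 ≤ L) (hh : 0 ≤ h)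
    (ha₀ : 0 ≤ a) (ha₁ : a ≤ 1) (hf : ∀ x y, |f x - f y| ≤ L * |x - y|) (x : ℝ) :
    |f (x - a * h) - (a * f x + (1 - a) * f (x - h))| ≤ L * h := by
  refine abs_sub_convexComb_le ha₀ ha₁ ((hf _ _).trans ?_) ((hf _ _).trans ?_)
  · rw [show x - a * h - x = -(a * h) by ring, abs_neg, abs_of_nonneg (by positivity)]
    exact mul_le_mul_of_nonneg_left (mul_le_of_le_one_left hh ha₁) hL
  · rw [show x - a * h - (x - h) = (1 - a) * h by ring,
      abs_of_nonneg (mul_nonneg (sub_nonneg.2 ha₁) hh)]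
    exact mul_le_mul_of_nonneg_left (mul_le_of_le_one_left hh (by linarith)) hL

lemma abs_sub_interp_grid_le {f : ℝ → ℝ} {g : ℤ → ℝ} {L E h a : ℝ} (hL : 0 ≤ L) (hh : 0 ≤ h)
    (ha₀ : 0 ≤ a) (ha₁ : a ≤ 1) (hf : ∀ x y, |f x - f y| ≤ L * |x - y|)
    (hg : ∀ k : ℤ, |f (k * h) - g k| ≤ E) (k : ℤ) :
    |f (k * h - a * h) - (a * g k + (1 - a) * g (k - 1))| ≤ E + L * h := by
  have hinterp := abs_sub_interp_of_lipschitz_le hL hh ha₀ ha₁ hf (k * h)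
  have hnodes : |(a * f (k * h) + (1 - a) * f (k * h - h)) - (a * g k + (1 - a) * g (k - 1))|
      ≤ E := by
    refine abs_convexComb_sub_convexComb_le ha₀ ha₁ (hg k) ?_
    simpa [sub_mul] using hg (k - 1)
  linarith [abs_sub_le (f (k * h - a * h)) (a * f (k * h) + (1 - a) * f (k * h - h))
    (a * g k + (1 - a) * g (k - 1))]

lemma sub_eq_floor_sub_fract_mul {h : ℝ} (hh : h ≠ 0) (k : ℤ) (c : ℝ) :
    k * h - c = ((k - ⌊c / h⌋ : ℤ) : ℝ) * h - Int.fract (c / h) * h := by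
  rw [Int.fract]
  push_cast
  field_simp
  ring

lemma abs_isLeast_sub_isLeast_le {ι : Type*} {f g : ι → ℝ} {m m' B : ℝ}
    (hfg : ∀ i, |f i - g i| ≤ B) (hm : IsLeast (Set.range f) m)
    (hm' : IsLeast (Set.range g) m') : |m - m'| ≤ B := by
  obtain ⟨⟨i, rfl⟩, hfi⟩ := hm
  obtain ⟨⟨i', rfl⟩, hgi'⟩ := hm'
  have h₁ : f i ≤ f i' := hfi ⟨i', rfl⟩
  have h₂ : g i' ≤ g i := hgi' ⟨i, rfl⟩
  have := abs_le.1 (hfg i)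
  have := abs_le.1 (hfg i')
  rw [abs_le]
  constructor <;> linarith

theorem interpolation_error_propagation_general
    (Δt Δv Δx L E : ℝ) (hΔx : 0 < Δx)
    (hL : 0 ≤ L)
    (φ : ℤ → ℝ → ℝ) (φd : ℤ → ℤ → ℝ) (μn : ℝ → ℝ) (μd : ℤ → ℝ)
    (β : ℤ → ℤ) (α : ℤ → ℝ) (φbar : ℤ → ℤ → ℝ)
    (hβ : ∀ j : ℤ, β j = ⌊(j : ℝ) * Δv * Δt / Δx⌋)
    (hα : ∀ j : ℤ, α j = (j : ℝ) * Δv * Δt / Δx - ((β j : ℝ)))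
    (hbar : ∀ i j : ℤ, φbar i j =
        α j * φd (i - β j) j + (1 - α j) * φd (i - β j - 1) j)
    (herr : ∀ i j : ℤ, |φ j ((i : ℝ) * Δx) - φd i j| ≤ E)
    (hlip : ∀ (j : ℤ) (x y : ℝ), |φ j x - φ j y| ≤ L * |x - y|)
    (hμn : ∀ x : ℝ, IsLeast
        (Set.range fun j : ℤ => φ j (x - Δt * ((j : ℝ) * Δv))) (μn x))
    (hμd : ∀ i : ℤ, IsLeast (Set.range fun j : ℤ => φbar i j) (μd i)) :
    (∀ i : ℤ, |μn ((i : ℝ) * Δx) - μd i| ≤ E + 2 * L * Δx) ∧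
    (∀ i j : ℤ,
      |min (φ j ((i : ℝ) * Δx - Δt * ((j : ℝ) * Δv)) + Δt)
          (((j : ℝ) * Δv) ^ 2 / 2 + μn ((i : ℝ) * Δx))
        - min (φbar i j + Δt) (((j : ℝ) * Δv) ^ 2 / 2 + μd i)|
        ≤ E + 2 * L * Δx) := by
  have hfoot : ∀ i j : ℤ,
      |φ j ((i : ℝ) * Δx - Δt * ((j : ℝ) * Δv)) - φbar i j| ≤ E + 2 * L * Δx := by
    intro i j
    have hαj : α j = Int.fract ((j : ℝ) * Δv * Δt / Δx) := by rw [hα, hβ, Int.fract]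
    rw [show Δt * ((j : ℝ) * Δv) = (j : ℝ) * Δv * Δt by ring,
      sub_eq_floor_sub_fract_mul hΔx.ne', hbar, hβ, hαj]
    refine (abs_sub_interp_grid_le hL hΔx.le (Int.fract_nonneg _) (Int.fract_lt_one _).le
      (hlip j) (fun k => herr k j) _).trans ?_
    linarith [mul_nonneg hL hΔx.le]
  have hμ : ∀ i : ℤ, |μn ((i : ℝ) * Δx) - μd i| ≤ E + 2 * L * Δx := fun i =>
    abs_isLeast_sub_isLeast_le (hfoot i) (hμn _) (hμd i)
  refine ⟨hμ, fun i j => (abs_min_sub_min_le_max _ _ _ _).trans (max_le ?_ ?_)⟩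
  · simpa using hfoot i j
  · simpa using hμ i

/-- One-step interpolation-error propagation for the fully discrete scheme:
if the current errors are bounded by `E` and the semi-discrete solution is
`L`-Lipschitz in `x`, then after one step of the scheme (with monotone linear
interpolation at the feet of the characteristics) the errors are bounded by
`E + 2LΔx`. -/
theorem interpolation_error_propagation
    (Δt Δv Δx L E : ℝ) (hΔt : 0 < Δt) (hΔv : 0 < Δv) (hΔx : 0 < Δx)
    (hL : 0 ≤ L) (hE : 0 ≤ E)
    (φ : ℤ → ℝ → ℝ) (φd : ℤ → ℤ → ℝ) (μn : ℝ → ℝ) (μd : ℤ → ℝ)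
    (β : ℤ → ℤ) (α : ℤ → ℝ) (φbar : ℤ → ℤ → ℝ)
    (hβ : ∀ j : ℤ, β j = ⌊(j : ℝ) * Δv * Δt / Δx⌋)
    (hα : ∀ j : ℤ, α j = (j : ℝ) * Δv * Δt / Δx - ((β j : ℝ)))
    (hbar : ∀ i j : ℤ, φbar i j =
        α j * φd (i - β j) j + (1 - α j) * φd (i - β j - 1) j)
    (herr : ∀ i j : ℤ, |φ j ((i : ℝ) * Δx) - φd i j| ≤ E)
    (hlip : ∀ (j : ℤ) (x y : ℝ), |φ j x - φ j y| ≤ L * |x - y|)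
    (hμn : ∀ x : ℝ, IsLeast
        (Set.range fun j : ℤ => φ j (x - Δt * ((j : ℝ) * Δv))) (μn x))
    (hμd : ∀ i : ℤ, IsLeast (Set.range fun j : ℤ => φbar i j) (μd i)) :
    (∀ i : ℤ, |μn ((i : ℝ) * Δx) - μd i| ≤ E + 2 * L * Δx) ∧
    (∀ i j : ℤ,
      |min (φ j ((i : ℝ) * Δx - Δt * ((j : ℝ) * Δv)) + Δt)
          (((j : ℝ) * Δv) ^ 2 / 2 + μn ((i : ℝ) * Δx))
        - min (φbar i j + Δt) (((j : ℝ) * Δv) ^ 2 / 2 + μd i)|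
        ≤ E + 2 * L * Δx) :=
  interpolation_error_propagation_general Δt Δv Δx L E hΔx hL φ φd μn μd β α φbar hβ hα hbar herr
    hlip hμn hμd
end
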